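/- Let S be a finite set, τ a permutation of S, S̃ = {e ∈ S : τ(e) ≠ e} the nontrivial region of τ, t̃ = |S̃|, and τ̃ the restriction of τ to S̃. Let w be a 2×2 matrix of positive reals with w01·w10 < w00·w11. Then the sum, over all pairs of labelings g, h : S̃ → {0,1} with δ(τ̃; g, h) ≤ 0, of Π_{i,j ∈ {0,1}} w_{ij}^{μ(g,h)_{ij}}, is at most ((w00 + w01 + w10 + w11)² − 2·(√(w00·w11) − √(w01·w10))²)^{t̃/2}. -/

import Mathlib

open Finset

/-- Unordered pairs of distinct vertices of `[n]`. -/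
abbrev VPairs (n : ℕ) := {e : Sym2 (Fin n) // ¬ e.IsDiag}

/-- A graph on `[n]`, identified with its edge-indicator function. -/
abbrev LabGraph (n : ℕ) := VPairs n → Bool

/-- The permutation of vertex pairs induced by a permutation of vertices. -/
def pairPerm {n : ℕ} (π : Equiv.Perm (Fin n)) : Equiv.Perm (VPairs n) where
  toFun e := ⟨e.val.map π, fun h => e.prop ((Sym2.isDiag_map π.injective).mp h)⟩
  invFun e := ⟨e.val.map π.symm, fun h => e.prop ((Sym2.isDiag_map π.symm.injective).mp h)⟩
  left_inv e := by
    ext1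
    simp [Sym2.map_map]
  right_inv e := by
    ext1
    simp [Sym2.map_map]

/-- Hamming distance between two labelings. -/
def hamming {S : Type*} [Fintype S] [DecidableEq S] (f g : S → Bool) : ℕ :=
  (Finset.univ.filter fun e => f e ≠ g e).card

/-- `δ(τ; f, g) = (Δ(f∘τ, g) − Δ(f, g))/2`, as a rational number. -/
def deltaQ {S : Type*} [Fintype S] [DecidableEq S] (τ : Equiv.Perm S) (f g : S → Bool) : ℚ :=
  (((hamming (f ∘ τ) g : ℚ)) - (hamming f g : ℚ)) / 2

/-- The entry `(i,j)` of the type `μ(f,g)`. -/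
def typeCount {S : Type*} [Fintype S] [DecidableEq S] (f g : S → Bool) (i j : Bool) : ℕ :=
  (Finset.univ.filter fun e => f e = i ∧ g e = j).card

/-- The joint edge distribution determined by a probability vector. -/
def pv (p11 p10 p01 p00 : ℝ) : Bool → Bool → ℝ :=
  fun a b => if a then (if b then p11 else p10) else (if b then p01 else p00)

open Classical in
/-- The probability of an event under the correlated Erdős–Rényi model `ER(n,p)`. -/
noncomputable def ERprob (n : ℕ) (p : Bool → Bool → ℝ)
    (E : LabGraph n × LabGraph n → Prop) : ℝ :=
  ∑ gab : LabGraph n × LabGraph n,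
    (if E gab then (1 : ℝ) else 0) * ∏ e : VPairs n, p (gab.1 e) (gab.2 e)

open Classical in
/-- The probability of an event under the joint distribution of a uniformly random
permutation `Π` of `[n]` together with `(G_a, G_b) ~ ER(n,p)` independent of it. -/
noncomputable def ERPermProb (n : ℕ) (p : Bool → Bool → ℝ)
    (E : Equiv.Perm (Fin n) → LabGraph n × LabGraph n → Prop) : ℝ :=
  (∑ π : Equiv.Perm (Fin n), ∑ gab : LabGraph n × LabGraph n,
    (if E π gab then (1 : ℝ) else 0) * ∏ e : VPairs n, p (gab.1 e) (gab.2 e))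
    / (Nat.factorial n)

/-- The anonymized graph `G_c`, determined by `G_c(l(Π)(e)) = G_a(e)`. -/
def anonymize {n : ℕ} (π : Equiv.Perm (Fin n)) (ga : LabGraph n) : LabGraph n :=
  fun e => ga ((pairPerm π).symm e)

/-- `S_{n,nt}`: the permutations of `[n]` with exactly `nt` non-fixed points. -/
def Snn (n nt : ℕ) : Finset (Equiv.Perm (Fin n)) :=
  Finset.univ.filter fun π => (Finset.univ.filter fun x => π x ≠ x).card = nt

open Classical in
/-- The generating function `A_{S,τ}(w,z)`; here `z^δ` is expressed as `√z^(2δ)`. -/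
noncomputable def AgF {S : Type*} [Fintype S] (τ : Equiv.Perm S)
    (w : Bool → Bool → ℝ) (z : ℝ) : ℝ :=
  ∑ g : S → Bool, ∑ h : S → Bool,
    (Real.sqrt z) ^ ((hamming (g ∘ τ) h : ℤ) - (hamming g h : ℤ)) *
      ∏ i : Bool, ∏ j : Bool, w i j ^ typeCount g h i j

/-- `a_ℓ(w,z)`: the generating function of a single cycle of length `ℓ`. -/
noncomputable def aGF (ℓ : ℕ) (w : Bool → Bool → ℝ) (z : ℝ) : ℝ :=
  AgF (finRotate ℓ) w z

open Classical in
/-- The number of cycles of length `ℓ` in the cycle decomposition of `τ`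
(the number of points whose `τ`-orbit has size `ℓ`, divided by `ℓ`). -/
noncomputable def cycleCount {S : Type*} [Fintype S] (τ : Equiv.Perm S) (ℓ : ℕ) : ℕ :=
  (Finset.univ.filter fun x : S =>
    (Finset.univ.filter fun y : S => τ.SameCycle x y).card = ℓ).card / ℓ

open Classical in
/-- The probability of an event under an Erdős–Rényi graph `G(n,p)`. -/
noncomputable def ERgraphProb (n : ℕ) (p : ℝ) (E : LabGraph n → Prop) : ℝ :=
  ∑ g : LabGraph n,
    (if E g then (1 : ℝ) else 0) * ∏ e : VPairs n, (if g e then p else 1 - p)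

open Classical in
/-- The number of automorphisms of a graph. -/
noncomputable def autCard {n : ℕ} (g : LabGraph n) : ℕ :=
  (Finset.univ.filter fun π : Equiv.Perm (Fin n) =>
    ∀ e : VPairs n, g (pairPerm π e) = g e).card

/-- The restriction of `τ` to its nontrivial region. -/
def restrictNontrivial {S : Type*} (τ : Equiv.Perm S) : Equiv.Perm {e : S // τ e ≠ e} :=
  τ.subtypePerm (fun x => not_congr (τ.apply_eq_iff_eq))

/-!
Rankin's trick: for `0 < s ≤ 1` the factor `s ^ Δ(g ∘ τ̃, h) * s⁻¹ ^ Δ(g, h)` is at least `1`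
on the event `δ ≤ 0`, so the sum is at most the unrestricted tilted sum. Summing that over `h`
edge by edge leaves `∑ g, ∏ e, M (g e) (g (τ̃ e))` for a `2 × 2` transfer matrix `M`, which is
the product of `trace (M ^ ℓ)` over the cycles of `τ̃`. As `M` has nonnegative eigenvalues
`λ₁, λ₂` and `τ̃` has no fixed points, every cycle length `ℓ` is at least `2` and
`trace (M ^ ℓ) = λ₁ ^ ℓ + λ₂ ^ ℓ ≤ (λ₁ ^ 2 + λ₂ ^ 2) ^ (ℓ / 2) = trace (M ^ 2) ^ (ℓ / 2)`.
Taking `s ^ 2 = √(w₀₁ w₁₀) / √(w₀₀ w₁₁)` gives `trace M = ∑ w` and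
`det M = (√(w₀₀ w₁₁) - √(w₀₁ w₁₀)) ^ 2`, and `trace (M ^ 2) = (trace M) ^ 2 - 2 det M`.
-/

universe u

namespace Equiv.Perm

section

variable {S : Type*} [DecidableEq S]

/-- `σ` with `y` cut out of its cycle: `σ⁻¹ y ↦ σ y`. -/
def skip (σ : Perm S) (y : S) : Perm {e // e ≠ y} :=
  (swap y (σ y) * σ).subtypePerm fun _ =>
    not_congr ((swap y (σ y) * σ).injective.eq_iff' (swap_apply_right y (σ y)))

theorem coe_skip_apply (σ : Perm S) (y : S) (e : {e // e ≠ y}) :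
    (σ.skip y e : S) = if σ e = y then σ y else σ e := by
  have : σ e ≠ σ y := σ.injective.ne e.2
  simp [skip, swap_apply_def, this]

theorem skip_apply_ne_self {σ : Perm S} {y : S} {e : {e // e ≠ y}} (hy : σ e ≠ y)
    (he : σ e ≠ e) : σ.skip y e ≠ e :=
  fun h => he (by simpa [coe_skip_apply, hy] using congrArg Subtype.val h)

variable [Fintype S] {α R : Type*} [Fintype α] [CommSemiring R]

/-- On a cycle `e₁ → ⋯ → eₗ` of `σ` this is `trace (W e₁ * ⋯ * W eₗ)`; in general it is the
product of these traces over all cycles of `σ`. -/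
def cycleTrace (σ : Perm S) (W : S → Matrix α α R) : R :=
  ∑ g : S → α, ∏ e, W e (g e) (g (σ e))

theorem cycleTrace_of_isEmpty [IsEmpty S] (σ : Perm S) (W : S → Matrix α α R) :
    σ.cycleTrace W = 1 := by
  simp [cycleTrace]

theorem cycleTrace_eq_trace_mul_cycleTrace_skip {σ : Perm S} {x : S} (hx : σ x = x)
    (W : S → Matrix α α R) :
    σ.cycleTrace W = (W x).trace * (σ.skip x).cycleTrace (fun e => W e) := by
  rw [cycleTrace, ← (funSplitAt x α).symm.sum_comp, Fintype.sum_prod_type, Matrix.trace,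
    Finset.sum_mul]
  refine Finset.sum_congr rfl fun b _ => ?_
  rw [cycleTrace, Finset.mul_sum]
  refine Finset.sum_congr rfl fun g _ => ?_
  rw [Fintype.prod_eq_mul_prod_subtype_ne _ x]
  congr 1
  · simp [hx]
  · refine Finset.prod_congr rfl fun e _ => ?_
    have he : σ e ≠ x := fun h => e.2 (σ.injective (h.trans hx.symm))
    have : σ.skip x e = ⟨σ e, he⟩ := Subtype.ext (by simp [coe_skip_apply, he])
    simp [funSplitAt_symm_apply, e.2, he, this]

theorem cycleTrace_eq_cycleTrace_skip_update {σ : Perm S} {x : S} (hx : x ≠ σ x)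
    (W : S → Matrix α α R) :
    σ.cycleTrace W = (σ.skip (σ x)).cycleTrace
      (Function.update (fun e => W e) ⟨x, hx⟩ (W x * W (σ x))) := by
  generalize hy : σ x = y at hx ⊢
  set x' : {e // e ≠ y} := ⟨x, hx⟩
  have hσx' : σ x' = y := hy
  have hσy : σ y ≠ y := fun h => hx (σ.injective (h.trans hy.symm)).symm
  have hskip_x : σ.skip y x' = ⟨σ y, hσy⟩ :=
    Subtype.ext (by simp [x', coe_skip_apply, ← hy])
  have hne (e : {e // e ≠ y}) (he : e ≠ x') : σ e ≠ y :=
    fun h => he (Subtype.ext (σ.injective (h.trans hσx'.symm)))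
  have hskip (e : {e // e ≠ y}) (he : e ≠ x') : σ.skip y e = ⟨σ e, hne e he⟩ :=
    Subtype.ext (by simp [coe_skip_apply, hne e he])
  rw [cycleTrace, ← (funSplitAt y α).symm.sum_comp, Fintype.sum_prod_type, Finset.sum_comm]
  refine Finset.sum_congr rfl fun g _ => ?_
  rw [Fintype.prod_eq_mul_prod_subtype_ne _ x', Function.update_self, Matrix.mul_apply,
    Finset.sum_mul]
  refine Finset.sum_congr rfl fun b _ => ?_
  rw [Fintype.prod_eq_mul_prod_subtype_ne _ y, Fintype.prod_eq_mul_prod_subtype_ne _ x',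
    ← mul_assoc, mul_comm (W y _ _)]
  congr 1
  · simp [funSplitAt_symm_apply, hskip_x, hσy, hσx', x'.2, x']
  · refine Finset.prod_congr rfl fun i _ => ?_
    simp [funSplitAt_symm_apply, Function.update_of_ne i.2, hskip i i.2, hne i i.2, i.1.2]

theorem cycleTrace_update_pow_eq_of_apply_ne_self [DecidableEq α] {σ : Perm S} {x : S}
    (hx : x ≠ σ x) (M : Matrix α α R) (k : ℕ) :
    σ.cycleTrace (Function.update (fun _ => M) x (M ^ k)) =
      (σ.skip (σ x)).cycleTrace (Function.update (fun _ => M) ⟨x, hx⟩ (M ^ (k + 1))) := by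
  rw [cycleTrace_eq_cycleTrace_skip_update hx, Function.update_self,
    Function.update_of_ne hx.symm, ← pow_succ]
  congr 1
  ext1 e
  rcases eq_or_ne e ⟨x, hx⟩ with rfl | he
  · simp
  · simp [he, Function.update_of_ne (fun h => he (Subtype.ext h))]

theorem cycleTrace_nonneg (σ : Perm S) {W : S → Matrix α α ℝ} (hW : ∀ e a b, 0 ≤ W e a b) :
    0 ≤ σ.cycleTrace W :=
  Finset.sum_nonneg fun _ _ => Finset.prod_nonneg fun _ _ => hW _ _ _

end

variable {α : Type*} [Fintype α] [DecidableEq α] {M : Matrix α α ℝ} {B : ℝ}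

/-- The marked point `x` carries the product `M ^ (k + 1)` of the matrices along the part of its
cycle that has already been contracted. -/
theorem cycleTrace_update_pow_le (hM : ∀ a b, 0 ≤ M a b) (hB : 0 ≤ B)
    (hpow : ∀ k : ℕ, 2 ≤ k → (M ^ k).trace ≤ B ^ ((k : ℝ) / 2)) (n : ℕ) :
    ∀ (S : Type u) [Fintype S] [DecidableEq S], Fintype.card S = n →
    (∀ (S' : Type u) [Fintype S'] [DecidableEq S'] (σ' : Perm S'), Fintype.card S' < n →
      (∀ e, σ' e ≠ e) → σ'.cycleTrace (fun _ => M) ≤ B ^ ((Fintype.card S' : ℝ) / 2)) →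
    ∀ (σ : Perm S) (x : S) (k : ℕ), (∀ e ≠ x, σ e ≠ e) → (σ x = x → k ≠ 0) →
      σ.cycleTrace (Function.update (fun _ => M) x (M ^ (k + 1))) ≤
        B ^ (((k + n : ℕ) : ℝ) / 2) := by
  induction n with
  | zero => exact fun S _ _ hcard _ _ x => (Fintype.card_eq_zero_iff.mp hcard).elim x
  | succ n ih =>
  intro S _ _ hcard hsmall σ x k hfree hfix
  by_cases hx : σ x = x
  · have hskip (e : {e // e ≠ x}) : σ.skip x e ≠ e :=
      skip_apply_ne_self (fun h => e.2 (σ.injective (h.trans hx.symm))) (hfree e e.2)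
    have hcard' : Fintype.card {e // e ≠ x} = n := by simp [hcard]
    have hrest := hsmall _ (σ.skip x) (by omega) hskip
    have hconst : (fun e : {e // e ≠ x} => Function.update (fun _ => M) x (M ^ (k + 1)) e) =
        fun _ => M := funext fun e => Function.update_of_ne e.2 _ _
    rw [cycleTrace_eq_trace_mul_cycleTrace_skip hx, Function.update_self, hconst]
    calc _ ≤ B ^ (((k + 1 : ℕ) : ℝ) / 2) * B ^ ((n : ℝ) / 2) := by
          rw [← hcard']
          exact mul_le_mul (hpow _ (by have := hfix hx; omega)) hrest
            (cycleTrace_nonneg _ fun _ => hM) (by positivity)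
      _ = _ := by
          rw [← Real.rpow_add_of_nonneg hB (by positivity) (by positivity), ← add_div]
          push_cast
          ring_nf
  · rw [cycleTrace_update_pow_eq_of_apply_ne_self (Ne.symm hx)]
    convert ih _ (by simp [hcard])
      (fun S' _ _ σ' hS' => hsmall S' σ' (by omega)) (σ.skip (σ x)) ⟨x, Ne.symm hx⟩ (k + 1)
      (fun e he => skip_apply_ne_self (fun h => he (Subtype.ext (σ.injective h)))
        (hfree e fun h => he (Subtype.ext h)))
      (fun _ => k.succ_ne_zero) using 4
    omega

theorem cycleTrace_le (hM : ∀ a b, 0 ≤ M a b) (hB : 0 ≤ B)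
    (hpow : ∀ k : ℕ, 2 ≤ k → (M ^ k).trace ≤ B ^ ((k : ℝ) / 2)) {S : Type u} [Fintype S]
    [DecidableEq S] (σ : Perm S) (hσ : ∀ e, σ e ≠ e) :
    σ.cycleTrace (fun _ => M) ≤ B ^ ((Fintype.card S : ℝ) / 2) := by
  induction h : Fintype.card S using Nat.strong_induction_on generalizing S with
  | _ n ih =>
  rcases isEmpty_or_nonempty S with hS | ⟨⟨x⟩⟩
  · simp [cycleTrace_of_isEmpty, ← h]
  · simpa using cycleTrace_update_pow_le hM hB hpow n S h
      (fun S' _ _ σ' hS' hσ' => ih _ hS' σ' hσ' rfl) σ x 0 (fun e _ => hσ e)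
      (fun h => (hσ x h).elim)

end Equiv.Perm

namespace Matrix

theorem mul_self_eq_trace_smul_sub_smul_one {R : Type*} [CommRing R] (M : Matrix Bool Bool R) :
    M * M = M.trace • M -
      (M false false * M true true - M false true * M true false) • (1 : Matrix Bool Bool R) := by
  ext a b
  cases a <;> cases b <;>
    simp only [mul_apply, trace, diag_apply, Fintype.sum_bool, sub_apply, smul_apply, smul_eq_mul,
      one_apply, Bool.false_eq_true, Bool.true_eq_false, ↓reduceIte] <;> ring

theorem trace_pow_eq_add_pow {R : Type*} [CommRing R] (M : Matrix Bool Bool R) {x y : R}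
    (hsum : x + y = M.trace)
    (hprod : x * y = M false false * M true true - M false true * M true false) (n : ℕ) :
    (M ^ n).trace = x ^ n + y ^ n := by
  induction n using Nat.twoStepInduction with
  | zero => norm_num [trace_one]
  | one => simp [hsum]
  | more n ih₀ ih₁ =>
    rw [pow_add, pow_two, mul_self_eq_trace_smul_sub_smul_one, mul_sub, mul_smul_comm,
      mul_smul_comm, mul_one, ← pow_succ, trace_sub, trace_smul, trace_smul, ih₀, ih₁, ← hsum,
      ← hprod, smul_eq_mul, smul_eq_mul]
    ring

theorem trace_pow_le_trace_sq_rpow (M : Matrix Bool Bool ℝ) (hM : ∀ a b, 0 ≤ M a b)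
    (hdet : M false true * M true false ≤ M false false * M true true) {k : ℕ} (hk : 2 ≤ k) :
    (M ^ k).trace ≤ (M ^ 2).trace ^ ((k : ℝ) / 2) := by
  set T := M.trace
  set D := M false false * M true true - M false true * M true false
  have hT : 0 ≤ T := Finset.sum_nonneg fun a _ => hM a a
  have hdisc : 0 ≤ T ^ 2 - 4 * D := by
    have h : T ^ 2 - 4 * D =
        (M false false - M true true) ^ 2 + 4 * (M false true * M true false) := by
      simp only [T, D, trace, Fintype.sum_bool, diag]
      ring
    have := hM false true
    have := hM true false
    rw [h]
    positivity
  set r := √(T ^ 2 - 4 * D)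
  have hr : r ^ 2 = T ^ 2 - 4 * D := Real.sq_sqrt hdisc
  have hrT : r ≤ T := Real.sqrt_le_iff.mpr ⟨hT, by linarith⟩
  have hsum : (T + r) / 2 + (T - r) / 2 = T := by ring
  have hprod : (T + r) / 2 * ((T - r) / 2) = D := by linear_combination (-1/4 : ℝ) * hr
  have hsq (z : ℝ) (hz : 0 ≤ z) : z ^ k = (z ^ 2) ^ ((k : ℝ) / 2) := by
    rw [← Real.rpow_natCast_mul hz, Nat.cast_ofNat, mul_div_cancel₀ _ two_ne_zero,
      Real.rpow_natCast]
  rw [trace_pow_eq_add_pow M hsum hprod, trace_pow_eq_add_pow M hsum hprod,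
    hsq _ (by linarith [Real.sqrt_nonneg (T ^ 2 - 4 * D)]), hsq _ (by linarith)]
  exact Real.add_rpow_le_rpow_add (sq_nonneg _) (sq_nonneg _)
    (by rw [le_div_iff₀ two_pos]; exact_mod_cast hk)

theorem trace_sq_eq {R : Type*} [CommRing R] (M : Matrix Bool Bool R) :
    (M ^ 2).trace =
      M.trace ^ 2 - 2 * (M false false * M true true - M false true * M true false) := by
  simp only [sq, mul_apply, trace, diag_apply, Fintype.sum_bool]
  ring

end Matrix

section Labelings

variable {S : Type*} [Fintype S] [DecidableEq S]

theorem pow_hamming {M : Type*} [CommMonoid M] (s : M) (f g : S → Bool) :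
    s ^ hamming f g = ∏ e, if f e = g e then 1 else s := by
  rw [Finset.prod_ite, Finset.prod_const_one, one_mul, Finset.prod_const, hamming]

theorem prod_pow_typeCount {M : Type*} [CommMonoid M] (w : Bool → Bool → M) (g h : S → Bool) :
    ∏ i, ∏ j, w i j ^ typeCount g h i j = ∏ e, w (g e) (h e) := by
  simp_rw [typeCount, ← Finset.prod_const, Finset.prod_filter]
  rw [Finset.prod_congr rfl fun i _ => Finset.prod_comm, Finset.prod_comm]
  refine Finset.prod_congr rfl fun e _ => ?_
  cases g e <;> cases h e <;> simp

/-- The weight of an edge `e` with `g e = a` and `g (σ e) = b`, summed over the label `c = h e`,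
when the pair `(g, h)` is weighted by `s ^ Δ(g ∘ σ, h) * s⁻¹ ^ Δ(g, h) * ∏ e, w (g e) (h e)`. -/
noncomputable def tiltedMatrix (w : Bool → Bool → ℝ) (s : ℝ) : Matrix Bool Bool ℝ :=
  Matrix.of fun a b => ∑ c, (if b = c then 1 else s) * (if a = c then 1 else s⁻¹) * w a c

theorem sum_pow_hamming_mul_prod_eq_cycleTrace (σ : Equiv.Perm S) (w : Bool → Bool → ℝ)
    (s : ℝ) :
    ∑ g : S → Bool, ∑ h : S → Bool, s ^ hamming (g ∘ σ) h * s⁻¹ ^ hamming g h *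
      ∏ i, ∏ j, w i j ^ typeCount g h i j = σ.cycleTrace (fun _ => tiltedMatrix w s) := by
  refine Finset.sum_congr rfl fun g _ => ?_
  simp_rw [pow_hamming, prod_pow_typeCount, ← Finset.prod_mul_distrib]
  exact (Fintype.prod_sum fun e c =>
    (if g (σ e) = c then 1 else s) * (if g e = c then 1 else s⁻¹) * w (g e) c).symm

theorem sum_filter_deltaQ_nonpos_le (σ : Equiv.Perm S) {w : Bool → Bool → ℝ}
    (hw : ∀ i j, 0 ≤ w i j) {s : ℝ} (hs₀ : 0 < s) (hs₁ : s ≤ 1) :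
    ∑ gh ∈ Finset.univ.filter (fun gh : (S → Bool) × (S → Bool) => deltaQ σ gh.1 gh.2 ≤ 0),
      ∏ i, ∏ j, w i j ^ typeCount gh.1 gh.2 i j ≤
    ∑ g : S → Bool, ∑ h : S → Bool, s ^ hamming (g ∘ σ) h * s⁻¹ ^ hamming g h *
      ∏ i, ∏ j, w i j ^ typeCount g h i j := by
  have hweight (g h : S → Bool) : 0 ≤ ∏ i, ∏ j, w i j ^ typeCount g h i j :=
    Finset.prod_nonneg fun i _ => Finset.prod_nonneg fun j _ => pow_nonneg (hw i j) _
  rw [← Fintype.sum_prod_type']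
  refine (Finset.sum_le_sum fun gh hgh => ?_).trans
    (Finset.sum_le_sum_of_subset_of_nonneg (Finset.filter_subset _ _) fun gh _ _ => ?_)
  · have hΔ : hamming (gh.1 ∘ σ) gh.2 ≤ hamming gh.1 gh.2 := by
      have := (Finset.mem_filter.mp hgh).2
      rw [deltaQ] at this
      exact_mod_cast (by linarith : (hamming (gh.1 ∘ σ) gh.2 : ℚ) ≤ hamming gh.1 gh.2)
    refine le_mul_of_one_le_left (hweight _ _) ?_
    calc (1 : ℝ) = s ^ hamming gh.1 gh.2 * s⁻¹ ^ hamming gh.1 gh.2 := by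
          rw [← mul_pow, mul_inv_cancel₀ hs₀.ne', one_pow]
      _ ≤ _ := mul_le_mul_of_nonneg_right (pow_le_pow_of_le_one hs₀.le hs₁ hΔ) (by positivity)
  · exact mul_nonneg (by positivity) (hweight _ _)

end Labelings

section Tilted

variable {w : Bool → Bool → ℝ} {s : ℝ}

theorem tiltedMatrix_det_eq {p q : ℝ} (hp : 0 < p) (hq : 0 < q) (hs : s ^ 2 = q / p)
    (hp2 : w false false * w true true = p ^ 2) (hq2 : w false true * w true false = q ^ 2) :
    tiltedMatrix w s false false * tiltedMatrix w s true true -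
      tiltedMatrix w s false true * tiltedMatrix w s true false = (p - q) ^ 2 := by
  have hs' : s ^ 2 * p = q := by rw [hs]; field_simp
  have hs0 : s ≠ 0 := by rintro rfl; linarith
  simp only [tiltedMatrix, Matrix.of_apply, Fintype.sum_bool, Bool.false_eq_true,
    Bool.true_eq_false, ↓reduceIte, one_mul]
  field_simp
  linear_combination (s ^ 2 - 1) * hq2 + s ^ 2 * (1 - s ^ 2) * hp2 - (s ^ 2 * p - q) * hs'

theorem tiltedMatrix_nonneg (hw : ∀ i j, 0 ≤ w i j) (hs : 0 < s) (a b : Bool) :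
    0 ≤ tiltedMatrix w s a b := by
  rw [tiltedMatrix, Matrix.of_apply]
  exact Finset.sum_nonneg fun c _ => mul_nonneg (by positivity) (hw a c)

theorem trace_tiltedMatrix (hs : s ≠ 0) :
    (tiltedMatrix w s).trace = w false false + w false true + w true false + w true true := by
  simp only [tiltedMatrix, Matrix.trace, Matrix.diag_apply, Matrix.of_apply, Fintype.sum_bool,
    Bool.false_eq_true, Bool.true_eq_false, ↓reduceIte, one_mul, mul_inv_cancel₀ hs]
  ring

end Tilted

open Classical in
/-- the lower-tail generating-function bound (Theorem 5). -/
theorem lower_tail_bound {S : Type*} [Fintype S] [DecidableEq S] (τ : Equiv.Perm S)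
    (w : Bool → Bool → ℝ) (hw : ∀ i j, 0 < w i j)
    (hcorr : w false true * w true false < w false false * w true true) :
    ∑ gh ∈ (Finset.univ.filter
        fun gh : ({e : S // τ e ≠ e} → Bool) × ({e : S // τ e ≠ e} → Bool) =>
          deltaQ (restrictNontrivial τ) gh.1 gh.2 ≤ 0),
      ∏ i : Bool, ∏ j : Bool, w i j ^ typeCount gh.1 gh.2 i j
    ≤ ((w false false + w false true + w true false + w true true) ^ 2
        - 2 * (Real.sqrt (w false false * w true true)
            - Real.sqrt (w false true * w true false)) ^ 2)
      ^ ((Fintype.card {e : S // τ e ≠ e} : ℝ) / 2) := by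
  set p := √(w false false * w true true)
  set q := √(w false true * w true false)
  have hp : 0 < p := Real.sqrt_pos.mpr (mul_pos (hw _ _) (hw _ _))
  have hq : 0 < q := Real.sqrt_pos.mpr (mul_pos (hw _ _) (hw _ _))
  set s := √(q / p)
  have hs₀ : 0 < s := Real.sqrt_pos.mpr (div_pos hq hp)
  have hs₁ : s ≤ 1 := Real.sqrt_le_one.mpr ((div_le_one hp).mpr (Real.sqrt_le_sqrt hcorr.le))
  set M := tiltedMatrix w s
  have hM := tiltedMatrix_nonneg (fun i j => (hw i j).le) hs₀
  have hdet : M false false * M true true - M false true * M true false = (p - q) ^ 2 :=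
    tiltedMatrix_det_eq hp hq (Real.sq_sqrt (div_pos hq hp).le)
      (Real.sq_sqrt (mul_pos (hw _ _) (hw _ _)).le).symm
      (Real.sq_sqrt (mul_pos (hw _ _) (hw _ _)).le).symm
  have hB : 0 ≤ (M ^ 2).trace := by
    simp only [sq, Matrix.trace, Matrix.diag, Matrix.mul_apply]
    exact Finset.sum_nonneg fun a _ => Finset.sum_nonneg fun b _ => mul_nonneg (hM _ _) (hM _ _)
  calc _ ≤ _ := sum_filter_deltaQ_nonpos_le _ (fun i j => (hw i j).le) hs₀ hs₁
    _ = (restrictNontrivial τ).cycleTrace (fun _ => M) :=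
      sum_pow_hamming_mul_prod_eq_cycleTrace _ w s
    _ ≤ (M ^ 2).trace ^ ((Fintype.card {e : S // τ e ≠ e} : ℝ) / 2) :=
      Equiv.Perm.cycleTrace_le hM hB
        (fun k hk => M.trace_pow_le_trace_sq_rpow hM (by nlinarith [sq_nonneg (p - q)]) hk)
        _ fun e h => e.2 (congrArg Subtype.val h)
    _ = _ := by rw [Matrix.trace_sq_eq, hdet, trace_tiltedMatrix hs₀.ne']
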